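/- For every positive integer n, every connected graph G with at most 4n−2 edges satisfies G ↛ (nK₂, C₃); that is, there exists a red-blue colouring of the edges of G containing neither a red matching of n edges nor a blue triangle. -/

import Mathlib

open SimpleGraph

/-- `G` contains a copy of `H`, i.e. there is an injective graph homomorphism from `H` to `G`. -/
def ContainsCopy {V W : Type*} (G : SimpleGraph V) (H : SimpleGraph W) : Prop :=
  ∃ f : H →g G, Function.Injective f

/-- `G` arrows `(G₁, G₂)`: for every red/blue colouring of the edges of `G`
(given by a subgraph `R ≤ G` of red edges, the blue edges being `G \ R`),
there is a red copy of `G₁` or a blue copy of `G₂`. -/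
def Arrows {V V₁ V₂ : Type*} (G : SimpleGraph V) (G₁ : SimpleGraph V₁) (G₂ : SimpleGraph V₂) :
    Prop :=
  ∀ R : SimpleGraph V, R ≤ G → ContainsCopy R G₁ ∨ ContainsCopy (G \ R) G₂

/-- The matching `nK₂` with `n` edges. -/
def Matching (n : ℕ) : SimpleGraph (Fin n × Fin 2) where
  Adj a b := a.1 = b.1 ∧ a.2 ≠ b.2
  symm := by constructor; intro a b h; exact ⟨h.1.symm, h.2.symm⟩
  loopless := by constructor; intro a h; exact h.2 rfl

/-- `n` disjoint copies of the graph `H`. -/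
def Copies (n : ℕ) {W : Type*} (H : SimpleGraph W) : SimpleGraph (Fin n × W) where
  Adj a b := a.1 = b.1 ∧ H.Adj a.2 b.2
  symm := by constructor; intro a b h; exact ⟨h.1.symm, h.2.symm⟩
  loopless := by constructor; intro a h; exact H.loopless.irrefl _ h.2

/-- Disjoint union of two graphs. -/
def DisjUnion {V W : Type*} (G : SimpleGraph V) (H : SimpleGraph W) : SimpleGraph (V ⊕ W) where
  Adj a b :=
    match a, b with
    | Sum.inl x, Sum.inl y => G.Adj x y
    | Sum.inr x, Sum.inr y => H.Adj x y
    | _, _ => False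
  symm := by
    constructor
    rintro (x | x) (y | y) h
    · exact h.symm
    · exact h.elim
    · exact h.elim
    · exact h.symm
  loopless := by
    constructor
    rintro (x | x) h
    · exact G.loopless.irrefl _ h
    · exact H.loopless.irrefl _ h

/-
Colour red the union of a few "units" (stars and triangles, i.e. sets of pairwise intersecting
edges) that together meet every triangle of `G`. The blue graph is then triangle-free, and a red
matching has at most one edge in each unit.

Let `A` be the family of triangles of `G`, as 3-sets, and `∂ A` its edges, as 2-sets; the
clusters of a set of edges are its classes under chains of edges in which consecutive edges share
a vertex. By strong induction on `A`, the triangles of `A` can be met by `k` units with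
`4 k ≤ #∂A + (number of clusters of ∂A)`:
* several clusters: cover each one separately;
* a vertex `v` whose star has at least three more edges than the edges avoiding `v` have
  clusters: take the star of `v` and cover the triangles avoiding `v`;
* a vertex `v` splitting the edges avoiding it into two clusters: cover the two sides
  separately, or take the star of `v` and cover both sides minus `v`;
* otherwise every vertex lies on at most three edges of triangles, and a single triangle shares
  an edge with all the others.
As `G` is connected, `#∂A + (number of clusters) ≤ e(G) + 1 ≤ 4n - 1`, so `k < n`.
-/

open Finset

namespace TriangleCover

open scoped Classical FinsetFamily

variable {V : Type*} {A B X Y C D : Finset (Finset V)} {s t e f g : Finset V} {u v w : V}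
  {U : Finset (Finset (Finset V))} {n : ℕ}

/-! ### Clusters of a family of edges -/

def Touch (X : Finset (Finset V)) (e f : Finset V) : Prop :=
  e ∈ X ∧ f ∈ X ∧ (e ∩ f).Nonempty

def Linked (X : Finset (Finset V)) : Finset V → Finset V → Prop :=
  Relation.ReflTransGen (Touch X)

theorem Touch.symm (h : Touch X e f) : Touch X f e :=
  ⟨h.2.1, h.1, by rw [inter_comm]; exact h.2.2⟩

theorem Linked.symm (h : Linked X e f) : Linked X f e := by
  induction h with
  | refl => exact .refl
  | tail _ h ih => exact Relation.ReflTransGen.head h.symm ih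

theorem Linked.trans (h : Linked X e f) (h' : Linked X f g) : Linked X e g :=
  Relation.ReflTransGen.trans h h'

theorem Linked.mono (hXY : X ⊆ Y) (h : Linked X e f) : Linked Y e f :=
  Relation.ReflTransGen.mono (fun _ _ h => ⟨hXY h.1, hXY h.2.1, h.2.2⟩) _ _ h

noncomputable def cluster (X : Finset (Finset V)) (e : Finset V) : Finset (Finset V) :=
  X.filter (Linked X e)

noncomputable def clusters (X : Finset (Finset V)) : Finset (Finset (Finset V)) :=
  X.image (cluster X)

noncomputable def numClusters (X : Finset (Finset V)) : ℕ := #(clusters X)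

theorem mem_cluster : f ∈ cluster X e ↔ f ∈ X ∧ Linked X e f := mem_filter

theorem mem_cluster_self (he : e ∈ X) : e ∈ cluster X e :=
  mem_cluster.2 ⟨he, .refl⟩

theorem cluster_eq_of_linked (h : Linked X e f) : cluster X e = cluster X f := by
  ext g
  simp only [mem_cluster]
  exact ⟨fun ⟨hg, h'⟩ => ⟨hg, h.symm.trans h'⟩, fun ⟨hg, h'⟩ => ⟨hg, h.trans h'⟩⟩

theorem mem_clusters : C ∈ clusters X ↔ ∃ e ∈ X, cluster X e = C := mem_image

theorem subset_of_mem_clusters (hC : C ∈ clusters X) : C ⊆ X := by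
  obtain ⟨e, -, rfl⟩ := mem_clusters.1 hC
  exact filter_subset _ _

theorem eq_cluster_of_mem (hC : C ∈ clusters X) (hf : f ∈ C) : C = cluster X f := by
  obtain ⟨e, -, rfl⟩ := mem_clusters.1 hC
  exact cluster_eq_of_linked (mem_cluster.1 hf).2

theorem cluster_mem_clusters (he : e ∈ X) : cluster X e ∈ clusters X :=
  mem_image_of_mem _ he

theorem eq_of_mem_clusters (hC : C ∈ clusters X) (hD : D ∈ clusters X) (he : e ∈ C)
    (hf : f ∈ D) (hef : (e ∩ f).Nonempty) : C = D := by
  rw [eq_cluster_of_mem hC he, eq_cluster_of_mem hD hf]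
  exact cluster_eq_of_linked (.single ⟨subset_of_mem_clusters hC he,
    subset_of_mem_clusters hD hf, hef⟩)

theorem mem_of_mem_clusters (hC : C ∈ clusters X) (he : e ∈ C) (hf : f ∈ X)
    (hef : (e ∩ f).Nonempty) : f ∈ C :=
  eq_of_mem_clusters hC (cluster_mem_clusters hf) he (mem_cluster_self hf) hef ▸
    mem_cluster_self hf

theorem linked_of_mem_clusters (hC : C ∈ clusters X) (he : e ∈ C) (hf : f ∈ C) :
    Linked C e f := by
  obtain rfl := eq_cluster_of_mem hC he
  induction (mem_cluster.1 hf).2 with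
  | refl => exact .refl
  | @tail b c hb hbc ih =>
    have hb' : b ∈ cluster X e := mem_cluster.2 ⟨(hbc.1), hb⟩
    exact (ih hb').tail ⟨hb', mem_of_mem_clusters hC hb' hbc.2.1 hbc.2.2, hbc.2.2⟩

theorem numClusters_le_one_iff : numClusters X ≤ 1 ↔ ∀ e ∈ X, ∀ f ∈ X, Linked X e f := by
  refine ⟨fun h e he f hf => ?_, fun h => card_le_one.2 fun C hC D hD => ?_⟩
  · have := card_le_one.1 h _ (cluster_mem_clusters he) _ (cluster_mem_clusters hf)
    exact (mem_cluster.1 (this ▸ mem_cluster_self hf)).2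
  · obtain ⟨e, he, rfl⟩ := mem_clusters.1 hC
    obtain ⟨f, hf, rfl⟩ := mem_clusters.1 hD
    exact cluster_eq_of_linked (h e he f hf)

theorem numClusters_le_one_of_mem_clusters (hC : C ∈ clusters X) : numClusters C ≤ 1 :=
  numClusters_le_one_iff.2 fun _ he _ hf => linked_of_mem_clusters hC he hf

theorem one_le_numClusters (hX : X.Nonempty) : 1 ≤ numClusters X :=
  card_pos.2 (hX.image _)

theorem sum_card_clusters (X : Finset (Finset V)) : ∑ C ∈ clusters X, #C = #X := by
  rw [← card_biUnion]
  · congr 1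
    ext e
    simp only [mem_biUnion]
    exact ⟨fun ⟨C, hC, he⟩ => subset_of_mem_clusters hC he,
      fun he => ⟨_, cluster_mem_clusters he, mem_cluster_self he⟩⟩
  · intro C hC D hD hCD
    refine disjoint_left.2 fun e heC heD => hCD ?_
    rw [eq_cluster_of_mem hC heC, eq_cluster_of_mem hD heD]

theorem cluster_insert_eq (he : e ∈ Y) (hg : ∀ d ∈ cluster Y e, ¬ (d ∩ g).Nonempty) :
    cluster (insert g Y) e = cluster Y e := by
  refine Subset.antisymm (fun f hf => ?_) fun f hf =>
    mem_cluster.2 ⟨mem_insert_of_mem (mem_cluster.1 hf).1, (mem_cluster.1 hf).2.mono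
      (subset_insert _ _)⟩
  induction (mem_cluster.1 hf).2 with
  | refl => exact mem_cluster_self he
  | @tail b c hb hbc ih =>
    have hbC := ih (mem_cluster.2 ⟨hbc.1, hb⟩)
    obtain rfl | hcY := mem_insert.1 hbc.2.1
    · exact absurd hbc.2.2 (hg b hbC)
    · exact mem_of_mem_clusters (cluster_mem_clusters he) hbC hcY hbc.2.2

theorem numClusters_le_numClusters_insert (hg : #g ≤ 2) :
    numClusters Y ≤ numClusters (insert g Y) + 1 := by
  by_cases hgY : g ∈ Y
  · rw [insert_eq_of_mem hgY]; omega
  -- At each endpoint of `g` at most one cluster of `Y` touches `g`; the clusters not touching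
  -- `g` remain clusters of `insert g Y`, distinct from the cluster of `g`.
  set P : Finset (Finset V) → Prop := fun C => ∃ d ∈ C, (d ∩ g).Nonempty
  have htouch : #((clusters Y).filter P) ≤ 2 := by
    refine (card_le_card_of_forall_subsingleton (fun C x => ∃ d ∈ C, x ∈ d ∩ g)
      (t := g) (fun C hC => ?_) fun x _ C hC D hD => ?_).trans hg
    · obtain ⟨d, hd, x, hx⟩ := (mem_filter.1 hC).2
      exact ⟨x, (mem_inter.1 hx).2, d, hd, hx⟩
    · obtain ⟨d, hd, hx⟩ := hC.2
      obtain ⟨d', hd', hx'⟩ := hD.2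
      exact eq_of_mem_clusters (mem_filter.1 hC.1).1 (mem_filter.1 hD.1).1 hd hd'
        ⟨x, mem_inter.2 ⟨(mem_inter.1 hx).1, (mem_inter.1 hx').1⟩⟩
  have hrest : (clusters Y).filter (¬ P ·) ⊆
      (clusters (insert g Y)).erase (cluster (insert g Y) g) := by
    intro C hC
    obtain ⟨hC, hCg⟩ := mem_filter.1 hC
    obtain ⟨e, he, rfl⟩ := mem_clusters.1 hC
    have hCg' : ∀ d ∈ cluster Y e, ¬ (d ∩ g).Nonempty := fun d hd h => hCg ⟨d, hd, h⟩
    rw [← cluster_insert_eq he hCg']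
    refine mem_erase.2 ⟨fun h => hgY ?_, cluster_mem_clusters (mem_insert_of_mem he)⟩
    have := h ▸ mem_cluster_self (mem_insert_self g Y)
    rw [cluster_insert_eq he hCg'] at this
    exact (mem_cluster.1 this).1
  have hpos := one_le_numClusters (X := insert g Y) ⟨g, mem_insert_self g Y⟩
  have := card_le_card hrest
  rw [card_erase_of_mem (cluster_mem_clusters (mem_insert_self g Y))] at this
  have hsplit := card_filter_add_card_filter_not (s := clusters Y) P
  unfold numClusters at *
  omega

theorem card_add_numClusters_le (hX : ∀ e ∈ X, #e ≤ 2) (hYX : Y ⊆ X) :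
    #Y + numClusters Y ≤ #X + numClusters X := by
  suffices ∀ s ⊆ X, #Y + numClusters Y ≤ #(s ∪ Y) + numClusters (s ∪ Y) by
    simpa [union_eq_left.2 hYX] using this X Subset.rfl
  intro s
  induction s using Finset.induction_on with
  | empty => simp
  | insert g s _ ih =>
    intro hs
    have ih := ih ((subset_insert _ _).trans hs)
    have hg := numClusters_le_numClusters_insert (Y := s ∪ Y) (hX g (hs (mem_insert_self g s)))
    rw [insert_union]
    by_cases hgs : g ∈ s ∪ Y
    · rwa [insert_eq_of_mem hgs]
    · rw [card_insert_of_notMem hgs]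
      omega

/-! ### Covers of triangle families -/

theorem card_of_mem_shadow (hA : ∀ t ∈ A, #t = 3) (he : e ∈ ∂ A) : #e = 2 := by
  obtain ⟨t, ht, -, h⟩ := mem_shadow_iff_exists_mem_card_add_one.1 he
  have := hA t ht
  omega

theorem mem_shadow_of_subset (ht : t ∈ A) (h3 : #t = 3) (he : e ⊆ t) (he2 : #e = 2) :
    e ∈ ∂ A :=
  mem_shadow_iff_exists_mem_card_add_one.2 ⟨t, ht, he, by omega⟩

theorem inter_nonempty_of_subset (h3 : #t = 3) (he : e ⊆ t) (hf : f ⊆ t) (he2 : #e = 2)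
    (hf2 : #f = 2) : (e ∩ f).Nonempty := by
  rw [← card_pos]
  have := card_union_add_card_inter e f
  have := card_le_card (union_subset he hf)
  omega

theorem exists_subset_mem_shadow (hA : ∀ t ∈ A, #t = 3) (ht : t ∈ A) :
    ∃ e ⊆ t, e ∈ ∂ A := by
  obtain ⟨e, he, he2⟩ := exists_subset_card_eq (s := t) (n := 2) (by rw [hA t ht]; omega)
  exact ⟨e, he, mem_shadow_of_subset ht (hA t ht) he he2⟩

theorem exists_edge_mem_not_mem (h3 : #t = 3) (hw : w ∈ t) (hwv : w ≠ v) :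
    ∃ e ⊆ t, #e = 2 ∧ w ∈ e ∧ v ∉ e := by
  have : 2 ≤ #(t.erase v) := by
    have := pred_card_le_card_erase (s := t) (a := v)
    omega
  obtain ⟨e, hwe, het, he2⟩ := exists_subsuperset_card_eq
    (singleton_subset_iff.2 (mem_erase.2 ⟨hwv, hw⟩)) (by simp) this
  exact ⟨e, het.trans (erase_subset v t), he2, singleton_subset_iff.1 hwe,
    fun hv => (notMem_erase v t) (het hv)⟩

theorem shadow_filter_not_mem_subset :
    ∂ (A.filter (v ∉ ·)) ⊆ (∂ A).filter (v ∉ ·) := by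
  intro e he
  obtain ⟨t, ht, het, -⟩ := mem_shadow_iff_exists_mem_card_add_one.1 he
  exact mem_filter.2 ⟨shadow_mono (filter_subset _ _) he, fun hv => (mem_filter.1 ht).2 (het hv)⟩

def IsCover (A : Finset (Finset V)) (U : Finset (Finset (Finset V))) : Prop :=
  (∀ u ∈ U, u ⊆ ∂ A ∧ (u : Set (Finset V)).Intersecting) ∧ ∀ t ∈ A, ∃ u ∈ U, ∃ e ∈ u, e ⊆ t

def HasSmallCover (A : Finset (Finset V)) : Prop :=
  ∃ U, IsCover A U ∧ 4 * #U ≤ #(∂ A) + numClusters (∂ A)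

theorem IsCover.union {U W : Finset (Finset (Finset V))} (hU : IsCover A U) (hW : IsCover B W) :
    IsCover (A ∪ B) (U ∪ W) := by
  refine ⟨fun u hu => ?_, fun t ht => ?_⟩
  · rcases mem_union.1 hu with hu | hu
    · exact ⟨(hU.1 u hu).1.trans (shadow_mono subset_union_left), (hU.1 u hu).2⟩
    · exact ⟨(hW.1 u hu).1.trans (shadow_mono subset_union_right), (hW.1 u hu).2⟩
  · rcases mem_union.1 ht with ht | ht
    · obtain ⟨u, hu, h⟩ := hU.2 t ht
      exact ⟨u, mem_union_left _ hu, h⟩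
    · obtain ⟨u, hu, h⟩ := hW.2 t ht
      exact ⟨u, mem_union_right _ hu, h⟩

theorem IsCover.biUnion {ι : Type*} {S : Finset ι} {A : ι → Finset (Finset V)}
    {U : ι → Finset (Finset (Finset V))} (h : ∀ i ∈ S, IsCover (A i) (U i)) :
    IsCover (S.biUnion A) (S.biUnion U) := by
  refine ⟨fun u hu => ?_, fun t ht => ?_⟩
  · obtain ⟨i, hi, hu⟩ := mem_biUnion.1 hu
    exact ⟨(h i hi).1 u hu |>.1.trans (shadow_mono (subset_biUnion_of_mem A hi)),
      ((h i hi).1 u hu).2⟩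
  · obtain ⟨i, hi, ht⟩ := mem_biUnion.1 ht
    obtain ⟨u, hu, hut⟩ := (h i hi).2 t ht
    exact ⟨u, mem_biUnion.2 ⟨i, hi, hu⟩, hut⟩

theorem IsCover.insert_star (hA : ∀ t ∈ A, #t = 3) {U : Finset (Finset (Finset V))}
    (hU : IsCover (A.filter (v ∉ ·)) U) : IsCover A (insert ((∂ A).filter (v ∈ ·)) U) := by
  refine ⟨fun u hu => ?_, fun t ht => ?_⟩
  · rcases mem_insert.1 hu with rfl | hu
    · exact ⟨filter_subset _ _, fun e he f hf => not_disjoint_iff.2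
        ⟨v, (mem_filter.1 he).2, (mem_filter.1 hf).2⟩⟩
    · exact ⟨(hU.1 u hu).1.trans (shadow_mono (filter_subset _ _)), (hU.1 u hu).2⟩
  · by_cases hvt : v ∈ t
    · obtain ⟨e, het, he2, hve⟩ : ∃ e ⊆ t, #e = 2 ∧ v ∈ e := by
        obtain ⟨e, hve, het, he2⟩ := exists_subsuperset_card_eq (n := 2)
          (singleton_subset_iff.2 hvt) (by simp) (by simp [hA t ht])
        exact ⟨e, het, he2, singleton_subset_iff.1 hve⟩
      exact ⟨_, mem_insert_self _ _, e,
        mem_filter.2 ⟨mem_shadow_of_subset ht (hA t ht) het he2, hve⟩, het⟩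
    · obtain ⟨u, hu, h⟩ := hU.2 t (mem_filter.2 ⟨ht, hvt⟩)
      exact ⟨u, mem_insert_of_mem hu, h⟩

theorem hasSmallCover_of_star (hA : ∀ t ∈ A, #t = 3)
    (hv : numClusters ((∂ A).filter (v ∉ ·)) + 3 ≤ #((∂ A).filter (v ∈ ·)))
    (ih : HasSmallCover (A.filter (v ∉ ·))) : HasSmallCover A := by
  obtain ⟨U, hU, hUcard⟩ := ih
  refine ⟨_, hU.insert_star hA, ?_⟩
  have hmono := card_add_numClusters_le (fun e he => (card_of_mem_shadow hA
    (mem_filter.1 he).1).le) (shadow_filter_not_mem_subset (A := A) (v := v))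
  have hsplit := card_filter_add_card_filter_not (s := ∂ A) (v ∈ ·)
  have hpos : 1 ≤ numClusters (∂ A) :=
    one_le_numClusters ((card_pos (s := (∂ A).filter (v ∈ ·))).1 (by omega) |>.mono
      (filter_subset _ _))
  have := card_insert_le ((∂ A).filter (v ∈ ·)) U
  omega

/-! ### Splitting a triangle family along clusters -/

noncomputable def trianglesOn (A C : Finset (Finset V)) : Finset (Finset V) :=
  A.filter fun t => ∃ e ∈ C, e ⊆ t

theorem shadow_union (A B : Finset (Finset V)) : ∂ (A ∪ B) = ∂ A ∪ ∂ B := by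
  ext e
  simp only [mem_shadow_iff, mem_union]
  constructor
  · rintro ⟨t, ht | ht, h⟩
    exacts [.inl ⟨t, ht, h⟩, .inr ⟨t, ht, h⟩]
  · rintro (⟨t, ht, h⟩ | ⟨t, ht, h⟩)
    exacts [⟨t, .inl ht, h⟩, ⟨t, .inr ht, h⟩]

theorem mem_of_mem_trianglesOn (hA : ∀ t ∈ A, #t = 3) (hY : Y ⊆ ∂ A) (hC : C ∈ clusters Y)
    (ht : t ∈ trianglesOn A C) (hf : f ⊆ t) (hf2 : #f = 2) (hfY : f ∈ Y) : f ∈ C := by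
  obtain ⟨htA, e, he, het⟩ := mem_filter.1 ht
  exact mem_of_mem_clusters hC he hfY (inter_nonempty_of_subset (hA t htA) het hf
    (card_of_mem_shadow hA (hY (subset_of_mem_clusters hC he))) hf2)

theorem subset_shadow_trianglesOn (hY : Y ⊆ ∂ A) (hC : C ∈ clusters Y) :
    C ⊆ ∂ (trianglesOn A C) := by
  intro e he
  obtain ⟨t, ht, het, h⟩ := mem_shadow_iff_exists_mem_card_add_one.1
    (hY (subset_of_mem_clusters hC he))
  exact mem_shadow_iff_exists_mem_card_add_one.2 ⟨t, mem_filter.2 ⟨ht, e, he, het⟩, het, h⟩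

theorem numClusters_shadow_trianglesOn_le_one (hA : ∀ t ∈ A, #t = 3) (hY : Y ⊆ ∂ A)
    (hC : C ∈ clusters Y) : numClusters (∂ (trianglesOn A C)) ≤ 1 := by
  have hlink : ∀ f ∈ ∂ (trianglesOn A C), ∃ e ∈ C, Linked (∂ (trianglesOn A C)) e f := by
    intro f hf
    obtain ⟨t, ht, hft, hf3⟩ := mem_shadow_iff_exists_mem_card_add_one.1 hf
    obtain ⟨htA, e, he, het⟩ := mem_filter.1 ht
    refine ⟨e, he, .single ⟨subset_shadow_trianglesOn hY hC he, hf,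
      inter_nonempty_of_subset (hA t htA) het hft ?_ (by rw [hA t htA] at hf3; omega)⟩⟩
    exact card_of_mem_shadow hA (hY (subset_of_mem_clusters hC he))
  refine numClusters_le_one_iff.2 fun f hf g hg => ?_
  obtain ⟨e, he, hef⟩ := hlink f hf
  obtain ⟨e', he', heg⟩ := hlink g hg
  exact hef.symm.trans (((linked_of_mem_clusters hC he he').mono
    (subset_shadow_trianglesOn hY hC)).trans heg)

theorem disjoint_trianglesOn (hA : ∀ t ∈ A, #t = 3) (hY : Y ⊆ ∂ A) (hC : C ∈ clusters Y)
    (hD : D ∈ clusters Y) (hCD : C ≠ D) : Disjoint (trianglesOn A C) (trianglesOn A D) := by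
  refine disjoint_left.2 fun t htC htD => hCD ?_
  obtain ⟨htA, e, he, het⟩ := mem_filter.1 htC
  obtain ⟨-, d, hd, hdt⟩ := mem_filter.1 htD
  exact eq_of_mem_clusters hC hD he hd (inter_nonempty_of_subset (hA t htA) het hdt
    (card_of_mem_shadow hA (hY (subset_of_mem_clusters hC he)))
    (card_of_mem_shadow hA (hY (subset_of_mem_clusters hD hd))))

theorem trianglesOn_ssubset (hA : ∀ t ∈ A, #t = 3) (hY : Y ⊆ ∂ A) (hC : C ∈ clusters Y)
    (hD : D ∈ clusters Y) (hCD : C ≠ D) : trianglesOn A C ⊂ A := by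
  refine (filter_subset _ _).ssubset_of_ne fun h => ?_
  obtain ⟨d, hdY, rfl⟩ := mem_clusters.1 hD
  obtain ⟨t, ht, hdt⟩ := exists_subset_of_mem_shadow (hY hdY)
  refine disjoint_left.1 (disjoint_trianglesOn hA hY hC hD hCD) (h ▸ ht) ?_
  exact mem_filter.2 ⟨ht, d, mem_cluster_self hdY, hdt⟩

theorem biUnion_trianglesOn (hA : ∀ t ∈ A, ∃ f ⊆ t, f ∈ Y) :
    (clusters Y).biUnion (trianglesOn A) = A := by
  refine Subset.antisymm (biUnion_subset.2 fun _ _ => filter_subset _ _) fun t ht => ?_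
  obtain ⟨f, hft, hf⟩ := hA t ht
  exact mem_biUnion.2 ⟨_, cluster_mem_clusters hf, mem_filter.2 ⟨ht, f, mem_cluster_self hf, hft⟩⟩

theorem biUnion_trianglesOn_filter_not_mem (hA : ∀ t ∈ A, #t = 3) :
    (clusters ((∂ A).filter (v ∉ ·))).biUnion (trianglesOn A) = A :=
  biUnion_trianglesOn fun t ht => by
    obtain ⟨w, hw, hwv⟩ := exists_mem_ne (s := t) (by rw [hA t ht]; omega) v
    obtain ⟨f, hft, hf2, -, hvf⟩ := exists_edge_mem_not_mem (hA t ht) hw hwv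
    exact ⟨f, hft, mem_filter.2 ⟨mem_shadow_of_subset ht (hA t ht) hft hf2, hvf⟩⟩

theorem exists_mem_trianglesOn_mem (hA : ∀ t ∈ A, #t = 3) (hconn : numClusters (∂ A) ≤ 1)
    (hv : ∃ g ∈ ∂ A, v ∈ g) (hC : C ∈ clusters ((∂ A).filter (v ∉ ·))) :
    ∃ t ∈ trianglesOn A C, v ∈ t := by
  set Y := (∂ A).filter (v ∉ ·)
  obtain ⟨g, hg, hvg⟩ := hv
  obtain ⟨e, heY, rfl⟩ := mem_clusters.1 hC
  have key : ∃ f ∈ cluster Y e, ∃ h ∈ ∂ A, v ∈ h ∧ (f ∩ h).Nonempty := by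
    suffices ∀ c, Linked (∂ A) e c →
        c ∈ cluster Y e ∨ ∃ f ∈ cluster Y e, ∃ h ∈ ∂ A, v ∈ h ∧ (f ∩ h).Nonempty from
      (this g (numClusters_le_one_iff.1 hconn e (mem_filter.1 heY).1 g hg)).resolve_left
        fun h => (mem_filter.1 (mem_cluster.1 h).1).2 hvg
    intro c hc
    induction hc with
    | refl => exact .inl (mem_cluster_self heY)
    | @tail b c _ hbc ih =>
      refine ih.elim (fun hb => ?_) .inr
      by_cases hvc : v ∈ c
      · exact .inr ⟨b, hb, c, hbc.2.1, hvc, hbc.2.2⟩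
      · exact .inl (mem_of_mem_clusters hC hb (mem_filter.2 ⟨hbc.2.1, hvc⟩) hbc.2.2)
  obtain ⟨f, hf, h, hh, hvh, w, hw⟩ := key
  obtain ⟨t, ht, hht⟩ := exists_subset_of_mem_shadow hh
  have hwv : w ≠ v := fun hwv =>
    (mem_filter.1 (mem_cluster.1 hf).1).2 (hwv ▸ (mem_inter.1 hw).1)
  obtain ⟨f', hf't, hf'2, hwf', hvf'⟩ :=
    exists_edge_mem_not_mem (hA t ht) (hht (mem_inter.1 hw).2) hwv
  have hf'C : f' ∈ cluster Y e := mem_of_mem_clusters hC hf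
    (mem_filter.2 ⟨mem_shadow_of_subset ht (hA t ht) hf't hf'2, hvf'⟩)
    ⟨w, mem_inter.2 ⟨(mem_inter.1 hw).1, hwf'⟩⟩
  exact ⟨t, mem_filter.2 ⟨ht, f', hf'C, hf't⟩, hht hvh⟩

theorem two_le_card_star_trianglesOn (hA : ∀ t ∈ A, #t = 3) (hconn : numClusters (∂ A) ≤ 1)
    (hv : ∃ g ∈ ∂ A, v ∈ g) (hC : C ∈ clusters ((∂ A).filter (v ∉ ·))) :
    2 ≤ #((∂ (trianglesOn A C)).filter (v ∈ ·)) := by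
  obtain ⟨t, ht, hvt⟩ := exists_mem_trianglesOn_mem hA hconn hv hC
  have h3 : #t = 3 := hA t (mem_filter.1 ht).1
  calc 2 = #((t.erase v).image t.erase) := by
        rw [card_image_of_injOn, card_erase_of_mem hvt, h3]
        intro x hx y hy hxy
        by_contra hne
        have : x ∈ t.erase y := mem_erase.2 ⟨hne, (mem_erase.1 (mem_coe.1 hx)).2⟩
        exact notMem_erase x t (hxy ▸ this)
    _ ≤ _ := card_le_card fun e he => by
        obtain ⟨x, hx, rfl⟩ := mem_image.1 he
        exact mem_filter.2 ⟨erase_mem_shadow ht (mem_erase.1 hx).2,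
          mem_erase.2 ⟨(mem_erase.1 hx).1.symm, hvt⟩⟩

theorem disjoint_shadow_trianglesOn (hA : ∀ t ∈ A, #t = 3)
    (hC : C ∈ clusters ((∂ A).filter (v ∉ ·))) (hD : D ∈ clusters ((∂ A).filter (v ∉ ·)))
    (hCD : C ≠ D) : Disjoint (∂ (trianglesOn A C)) (∂ (trianglesOn A D)) := by
  refine disjoint_left.2 fun e heC heD => hCD ?_
  have he2 : #e = 2 := card_of_mem_shadow hA (shadow_mono (filter_subset _ _) heC)
  obtain ⟨w, hw⟩ : (e.erase v).Nonempty := by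
    rw [← card_pos]; have := pred_card_le_card_erase (s := e) (a := v); omega
  have hY : (∂ A).filter (v ∉ ·) ⊆ ∂ A := filter_subset _ _
  have hedge : ∀ {C}, C ∈ clusters ((∂ A).filter (v ∉ ·)) → e ∈ ∂ (trianglesOn A C) →
      ∃ f ∈ C, w ∈ f := by
    intro C hC heC
    obtain ⟨t, ht, het⟩ := exists_subset_of_mem_shadow heC
    have htA := (mem_filter.1 ht).1
    obtain ⟨f, hft, hf2, hwf, hvf⟩ :=
      exists_edge_mem_not_mem (hA t htA) (het (mem_erase.1 hw).2) (mem_erase.1 hw).1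
    exact ⟨f, mem_of_mem_trianglesOn hA hY hC ht hft hf2
      (mem_filter.2 ⟨mem_shadow_of_subset htA (hA t htA) hft hf2, hvf⟩), hwf⟩
  obtain ⟨f, hf, hwf⟩ := hedge hC heC
  obtain ⟨f', hf', hwf'⟩ := hedge hD heD
  exact eq_of_mem_clusters hC hD hf hf' ⟨w, mem_inter.2 ⟨hwf, hwf'⟩⟩

/-- Each cluster of the edges avoiding `v` has two edges of the star of `v` of its own. -/
theorem two_mul_numClusters_le (hA : ∀ t ∈ A, #t = 3) (hconn : numClusters (∂ A) ≤ 1)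
    (hv : ∃ g ∈ ∂ A, v ∈ g) :
    2 * numClusters ((∂ A).filter (v ∉ ·)) ≤ #((∂ A).filter (v ∈ ·)) := by
  set Y := (∂ A).filter (v ∉ ·)
  calc 2 * numClusters Y = ∑ _C ∈ clusters Y, 2 := by rw [sum_const, smul_eq_mul, mul_comm]; rfl
    _ ≤ ∑ C ∈ clusters Y, #((∂ (trianglesOn A C)).filter (v ∈ ·)) :=
        sum_le_sum fun C hC => two_le_card_star_trianglesOn hA hconn hv hC
    _ = #((clusters Y).biUnion fun C => (∂ (trianglesOn A C)).filter (v ∈ ·)) :=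
        (card_biUnion fun C hC D hD hCD =>
          (disjoint_shadow_trianglesOn hA hC hD hCD).mono (filter_subset _ _)
            (filter_subset _ _)).symm
    _ ≤ _ := card_le_card <| biUnion_subset.2 fun C _ =>
        filter_subset_filter _ (shadow_mono (filter_subset _ _))

theorem hasSmallCover_of_two_le_numClusters (hA : ∀ t ∈ A, #t = 3)
    (h2 : 2 ≤ numClusters (∂ A)) (ih : ∀ B ⊂ A, HasSmallCover B) : HasSmallCover A := by
  have hY : ∂ A ⊆ ∂ A := Subset.rfl
  have hsub : ∀ C ∈ clusters (∂ A), trianglesOn A C ⊂ A := by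
    intro C hC
    obtain ⟨D, hD, hDC⟩ := exists_mem_ne h2 C
    exact trianglesOn_ssubset hA hY hC hD hDC.symm
  have hshadow : ∀ C ∈ clusters (∂ A), ∂ (trianglesOn A C) = C := fun C hC =>
    Subset.antisymm (fun e he => by
      obtain ⟨t, ht, het⟩ := exists_subset_of_mem_shadow he
      exact mem_of_mem_trianglesOn hA hY hC ht het (card_of_mem_shadow hA
        (shadow_mono (filter_subset _ _) he)) (shadow_mono (filter_subset _ _) he))
      (subset_shadow_trianglesOn hY hC)
  choose! U hU hUcard using fun C hC => ih _ (hsub C hC)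
  have hcover := IsCover.biUnion hU
  rw [biUnion_trianglesOn fun t ht => exists_subset_mem_shadow hA ht] at hcover
  refine ⟨_, hcover, ?_⟩
  calc 4 * #((clusters (∂ A)).biUnion U) ≤ ∑ C ∈ clusters (∂ A), 4 * #(U C) := by
        rw [← mul_sum]; exact Nat.mul_le_mul_left _ card_biUnion_le
    _ ≤ ∑ C ∈ clusters (∂ A), (#C + 1) := sum_le_sum fun C hC => by
        have := hUcard C hC
        rw [hshadow C hC] at this
        have := numClusters_le_one_of_mem_clusters hC
        omega
    _ = #(∂ A) + numClusters (∂ A) := by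
        rw [sum_add_distrib, sum_card_clusters, ← card_eq_sum_ones]; rfl

theorem exists_covers_trianglesOn (hA : ∀ t ∈ A, #t = 3) (hconn : numClusters (∂ A) ≤ 1)
    (hv : ∃ g ∈ ∂ A, v ∈ g) (hC : C ∈ clusters ((∂ A).filter (v ∉ ·)))
    (hCA : trianglesOn A C ⊂ A) (ih : ∀ B ⊂ A, HasSmallCover B) :
    (∃ U, IsCover (trianglesOn A C) U ∧ 4 * #U ≤ #(∂ (trianglesOn A C)) + 1) ∧
    ∃ U, IsCover ((trianglesOn A C).filter (v ∉ ·)) U ∧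
      4 * #U + 1 ≤ #(∂ (trianglesOn A C)) := by
  have hY : (∂ A).filter (v ∉ ·) ⊆ ∂ A := filter_subset _ _
  refine ⟨?_, ?_⟩
  · obtain ⟨U, hU, hcard⟩ := ih _ hCA
    exact ⟨U, hU, hcard.trans (by
      have := numClusters_shadow_trianglesOn_le_one hA hY hC; omega)⟩
  · obtain ⟨U, hU, hcard⟩ := ih ((trianglesOn A C).filter (v ∉ ·))
      ((filter_subset _ _).trans_ssubset hCA)
    refine ⟨U, hU, ?_⟩
    have hsub : ∂ ((trianglesOn A C).filter (v ∉ ·)) ⊆ C := fun e he => by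
      obtain ⟨t, ht, het⟩ := exists_subset_of_mem_shadow he
      have he' := shadow_mono ((filter_subset _ _).trans (filter_subset _ _)) he
      exact mem_of_mem_trianglesOn hA hY hC (mem_filter.1 ht).1 het
        (card_of_mem_shadow hA he') (mem_filter.2 ⟨he', fun hv => (mem_filter.1 ht).2 (het hv)⟩)
    have hmono := card_add_numClusters_le (fun e he => (card_of_mem_shadow hA
      (hY (subset_of_mem_clusters hC he))).le) hsub
    have hone := numClusters_le_one_of_mem_clusters hC
    have hstar := two_le_card_star_trianglesOn hA hconn hv hC
    have hCsub : C ⊆ (∂ (trianglesOn A C)).filter (v ∉ ·) := fun e he =>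
      mem_filter.2 ⟨subset_shadow_trianglesOn hY hC he,
        (mem_filter.1 (subset_of_mem_clusters hC he)).2⟩
    have := card_le_card hCsub
    have := card_filter_add_card_filter_not (s := ∂ (trianglesOn A C)) (v ∈ ·)
    omega

/-- Covering the two sides separately fails only if each side needs `(#edges + 1) / 4` units,
i.e. has `3 (mod 4)` edges; then covering each side minus `v` saves a unit on each side, which
pays for the star of `v`. -/
theorem hasSmallCover_of_numClusters_eq_two (hA : ∀ t ∈ A, #t = 3)
    (hconn : numClusters (∂ A) ≤ 1) (h2 : numClusters ((∂ A).filter (v ∉ ·)) = 2)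
    (ih : ∀ B ⊂ A, HasSmallCover B) : HasSmallCover A := by
  set Y := (∂ A).filter (v ∉ ·)
  have hY : Y ⊆ ∂ A := filter_subset _ _
  obtain ⟨C, D, hCD, hCD'⟩ := card_eq_two.1 h2
  have hC : C ∈ clusters Y := by rw [hCD']; simp
  have hD : D ∈ clusters Y := by rw [hCD']; simp
  have hv : ∃ g ∈ ∂ A, v ∈ g := by
    by_contra! h
    have : Y = ∂ A := filter_true_of_mem h
    rw [this] at h2
    omega
  have hsplit : A = trianglesOn A C ∪ trianglesOn A D := by
    have := biUnion_trianglesOn_filter_not_mem hA (v := v)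
    rw [hCD', biUnion_insert, singleton_biUnion] at this
    exact this.symm
  have hE : #(∂ A) = #(∂ (trianglesOn A C)) + #(∂ (trianglesOn A D)) := by
    conv_lhs => rw [hsplit, shadow_union]
    exact card_union_of_disjoint (disjoint_shadow_trianglesOn hA hC hD hCD)
  obtain ⟨⟨U, hU, hUc⟩, U', hU', hU'c⟩ := exists_covers_trianglesOn hA hconn hv hC
    (trianglesOn_ssubset hA hY hC hD hCD) ih
  obtain ⟨⟨W, hW, hWc⟩, W', hW', hW'c⟩ := exists_covers_trianglesOn hA hconn hv hD
    (trianglesOn_ssubset hA hY hD hC hCD.symm) ih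
  have hpos : 1 ≤ numClusters (∂ A) := one_le_numClusters (by
    obtain ⟨g, hg, -⟩ := hv; exact ⟨g, hg⟩)
  by_cases hsmall : 4 * (#U + #W) ≤ #(∂ A) + 1
  · refine ⟨U ∪ W, hsplit ▸ hU.union hW, ?_⟩
    have := card_union_le U W
    omega
  · have hcover : IsCover (A.filter (v ∉ ·)) (U' ∪ W') := by
      rw [hsplit, filter_union]; exact hU'.union hW'
    refine ⟨_, hcover.insert_star hA, ?_⟩
    have := card_insert_le ((∂ A).filter (v ∈ ·)) (U' ∪ W')
    have := card_union_le U' W'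
    omega

/-! ### Triangle families of maximum degree three -/

noncomputable def closedNbhd (A : Finset (Finset V)) (u : V) : Finset V :=
  (A.filter (u ∈ ·)).biUnion id

theorem card_closedNbhd_le (hA : ∀ t ∈ A, #t = 3) (u : V) :
    #(closedNbhd A u) ≤ #((∂ A).filter (u ∈ ·)) + 1 := by
  have : #((closedNbhd A u).erase u) ≤ #((∂ A).filter (u ∈ ·)) := by
    refine card_le_card_of_injOn (fun w => {u, w}) (fun w hw => ?_) fun w hw w' hw' h => ?_
    · obtain ⟨hwu, hw⟩ := mem_erase.1 hw
      obtain ⟨t, ht, hwt⟩ := mem_biUnion.1 hw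
      obtain ⟨htA, hut⟩ := mem_filter.1 ht
      exact mem_filter.2 ⟨mem_shadow_of_subset htA (hA t htA)
        (insert_subset hut (singleton_subset_iff.2 hwt)) (card_pair hwu.symm), mem_insert_self _ _⟩
    · have h : ({u, w} : Finset V) = {u, w'} := h
      have : w ∈ ({u, w'} : Finset V) := h ▸ by simp
      simpa [(mem_erase.1 (mem_coe.1 hw)).1] using this
  have := pred_card_le_card_erase (s := closedNbhd A u) (a := u)
  omega

/-- Triangles through `u` lie in `closedNbhd A u`, which has at most four vertices, so any two
of them share an edge. -/
theorem two_le_card_inter (hA : ∀ t ∈ A, #t = 3)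
    (hdeg : ∀ u, #((∂ A).filter (u ∈ ·)) ≤ 3) (hs : s ∈ A) (ht : t ∈ A) (hu : u ∈ s ∩ t) :
    2 ≤ #(s ∩ t) := by
  have hsub : s ∪ t ⊆ closedNbhd A u := union_subset
    (subset_biUnion_of_mem id (mem_filter.2 ⟨hs, (mem_inter.1 hu).1⟩))
    (subset_biUnion_of_mem id (mem_filter.2 ⟨ht, (mem_inter.1 hu).2⟩))
  have := card_le_card hsub
  have := card_closedNbhd_le hA u
  have := hdeg u
  have := card_union_add_card_inter s t
  have := hA s hs
  have := hA t ht
  omega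

theorem forall_two_le_card_inter (hA : ∀ t ∈ A, #t = 3) (hconn : numClusters (∂ A) ≤ 1)
    (hdeg : ∀ u, #((∂ A).filter (u ∈ ·)) ≤ 3) {t₁ : Finset V} (ht₁ : t₁ ∈ A) :
    ∀ t ∈ A, 2 ≤ #(t ∩ t₁) := by
  obtain ⟨e₁, he₁t, he₁⟩ := exists_subset_mem_shadow hA ht₁
  intro t ht
  obtain ⟨e, het, he⟩ := exists_subset_mem_shadow hA ht
  suffices ∀ g, Linked (∂ A) e₁ g → ∀ s ∈ A, g ⊆ s → 2 ≤ #(s ∩ t₁) from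
    this e (numClusters_le_one_iff.1 hconn e₁ he₁ e he) t ht het
  intro g hg
  induction hg with
  | refl =>
    intro s _ hs
    rw [← card_of_mem_shadow hA he₁]
    exact card_le_card (subset_inter hs he₁t)
  | @tail b c _ hbc ih =>
    intro s hs hcs
    obtain ⟨r, hr, hbr⟩ := exists_subset_of_mem_shadow hbc.1
    obtain ⟨u, hu⟩ := hbc.2.2
    have hrs := two_le_card_inter hA hdeg hr hs
      (mem_inter.2 ⟨hbr (mem_inter.1 hu).1, hcs (mem_inter.1 hu).2⟩)
    have hrt := ih r hr hbr
    obtain ⟨x, hx⟩ : ((r ∩ s) ∩ (r ∩ t₁)).Nonempty := by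
      rw [← card_pos]
      have := card_union_add_card_inter (r ∩ s) (r ∩ t₁)
      have := card_le_card (union_subset (inter_subset_left (s₁ := r) (s₂ := s))
        (inter_subset_left (s₁ := r) (s₂ := t₁)))
      have := hA r hr
      omega
    simp only [mem_inter] at hx
    exact two_le_card_inter hA hdeg hs ht₁ (mem_inter.2 ⟨hx.1.2, hx.2.2⟩)

theorem hasSmallCover_of_subcubic (hA : ∀ t ∈ A, #t = 3) (hne : A.Nonempty)
    (hconn : numClusters (∂ A) ≤ 1) (hdeg : ∀ u, #((∂ A).filter (u ∈ ·)) ≤ 3) :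
    HasSmallCover A := by
  obtain ⟨t₁, ht₁⟩ := hne
  have hunit : t₁.powersetCard 2 ⊆ ∂ A := fun e he =>
    mem_shadow_of_subset ht₁ (hA t₁ ht₁) (mem_powersetCard.1 he).1 (mem_powersetCard.1 he).2
  refine ⟨{t₁.powersetCard 2}, ⟨fun u hu => ?_, fun t ht => ?_⟩, ?_⟩
  · rw [mem_singleton.1 hu]
    refine ⟨hunit, fun e he f hf => not_disjoint_iff_nonempty_inter.2 ?_⟩
    rw [mem_coe, mem_powersetCard] at he hf
    exact inter_nonempty_of_subset (hA t₁ ht₁) he.1 hf.1 he.2 hf.2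
  · obtain ⟨e, he, he2⟩ := exists_subset_card_eq (forall_two_le_card_inter hA hconn hdeg ht₁ t ht)
    exact ⟨_, mem_singleton_self _, e, mem_powersetCard.2 ⟨he.trans inter_subset_right, he2⟩,
      he.trans inter_subset_left⟩
  · have h3 : 3 ≤ #(∂ A) := by simpa [hA t₁ ht₁] using card_le_card hunit
    have := one_le_numClusters (card_pos.1 (by omega : 0 < #(∂ A)))
    rw [card_singleton]
    omega

theorem hasSmallCover (A : Finset (Finset V)) (hA : ∀ t ∈ A, #t = 3) : HasSmallCover A := by
  induction A using Finset.strongInduction with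
  | H A ih =>
  replace ih : ∀ B ⊂ A, HasSmallCover B := fun B hB => ih B hB fun t ht => hA t (hB.subset ht)
  obtain rfl | hne := A.eq_empty_or_nonempty
  · exact ⟨∅, ⟨by simp, by simp⟩, by simp⟩
  by_cases hconn : numClusters (∂ A) ≤ 1
  swap
  · exact hasSmallCover_of_two_le_numClusters hA (by omega) ih
  have hstar_ne : ∀ v, 0 < #((∂ A).filter (v ∈ ·)) → ∃ g ∈ ∂ A, v ∈ g := fun v h => by
    obtain ⟨g, hg⟩ := card_pos.1 h
    exact ⟨g, mem_filter.1 hg⟩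
  by_cases hstar : ∃ v, numClusters ((∂ A).filter (v ∉ ·)) + 3 ≤ #((∂ A).filter (v ∈ ·))
  · obtain ⟨v, hv⟩ := hstar
    obtain ⟨g, hg, hvg⟩ := hstar_ne v (by omega)
    obtain ⟨t, ht, hgt⟩ := exists_subset_of_mem_shadow hg
    refine hasSmallCover_of_star hA hv (ih _ ((filter_subset _ _).ssubset_of_ne fun h => ?_))
    rw [← h] at ht
    exact (mem_filter.1 ht).2 (hgt hvg)
  by_cases htwo : ∃ v, numClusters ((∂ A).filter (v ∉ ·)) = 2
  · obtain ⟨v, hv⟩ := htwo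
    exact hasSmallCover_of_numClusters_eq_two hA hconn hv ih
  simp only [not_exists, not_le] at hstar htwo
  refine hasSmallCover_of_subcubic hA hne hconn fun v => ?_
  by_contra! h
  have := two_mul_numClusters_le hA hconn (hstar_ne v (by omega))
  have := hstar v
  have := htwo v
  omega

noncomputable def unionGraph (U : Finset (Finset (Finset V))) : SimpleGraph V :=
  fromRel fun x y => ∃ u ∈ U, {x, y} ∈ u

theorem unionGraph_adj {x y : V} : (unionGraph U).Adj x y ↔ x ≠ y ∧ ∃ u ∈ U, {x, y} ∈ u := by
  rw [unionGraph, fromRel_adj, pair_comm y x, or_self]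

theorem not_containsCopy_matching (hU : ∀ u ∈ U, (u : Set (Finset V)).Intersecting)
    (hn : #U < n) : ¬ ContainsCopy (unionGraph U) (Matching n) := by
  rintro ⟨f, hf⟩
  have hedge (i : Fin n) : ∃ u ∈ U, {f (i, 0), f (i, 1)} ∈ u :=
    (unionGraph_adj.1 (f.map_adj (show (Matching n).Adj (i, 0) (i, 1) from
      ⟨rfl, by simp⟩))).2
  choose κ hκU hκ using hedge
  obtain ⟨i, -, j, -, hij, hκij⟩ := exists_ne_map_eq_of_card_lt_of_maps_to
    (s := univ) (t := U) (by simpa using hn) fun i _ => hκU i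
  obtain ⟨x, hx⟩ := not_disjoint_iff_nonempty_inter.1
    (hU _ (hκU i) (hκ i) (hκij ▸ hκ j))
  have hne (a b : Fin 2) (h : f (i, a) = f (j, b)) : False := hij (congrArg Prod.fst (hf h))
  simp only [mem_inter, mem_insert, mem_singleton] at hx
  rcases hx with ⟨rfl | rfl, h | h⟩ <;> exact hne _ _ h

section Graph

open SimpleGraph

variable [Fintype V] (G : SimpleGraph V)

noncomputable def edgeFamily : Finset (Finset V) := G.edgeFinset.image Sym2.toFinset

variable {G}

theorem pair_mem_edgeFamily {x y : V} (h : G.Adj x y) : {x, y} ∈ edgeFamily G :=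
  mem_image.2 ⟨s(x, y), mem_edgeFinset.2 h, Sym2.toFinset_mk_eq⟩

theorem linked_edgeFamily_of_walk {x y : V} (p : G.Walk x y) {e f : Finset V}
    (he : e ∈ edgeFamily G) (hf : f ∈ edgeFamily G) (hx : x ∈ e) (hy : y ∈ f) :
    Linked (edgeFamily G) e f := by
  induction p generalizing e with
  | nil => exact .single ⟨he, hf, _, mem_inter.2 ⟨hx, hy⟩⟩
  | cons h p ih =>
    exact .head ⟨he, pair_mem_edgeFamily h, _, mem_inter.2 ⟨hx, mem_insert_self _ _⟩⟩
      (ih (pair_mem_edgeFamily h) (mem_insert_of_mem (mem_singleton_self _)) hy)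

theorem numClusters_edgeFamily_le_one (hG : G.Preconnected) :
    numClusters (edgeFamily G) ≤ 1 := by
  refine numClusters_le_one_iff.2 fun e he f hf => ?_
  obtain ⟨z, -, rfl⟩ := mem_image.1 he
  obtain ⟨z', -, rfl⟩ := mem_image.1 hf
  obtain ⟨x, hx⟩ := Sym2.toFinset_ne_empty z |> nonempty_iff_ne_empty.2
  obtain ⟨y, hy⟩ := Sym2.toFinset_ne_empty z' |> nonempty_iff_ne_empty.2
  exact linked_edgeFamily_of_walk (hG x y).some he hf hx hy

theorem adj_of_mem_shadow_cliqueFinset {x y : V} (hxy : x ≠ y)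
    (h : {x, y} ∈ ∂ (G.cliqueFinset 3)) : G.Adj x y := by
  obtain ⟨t, ht, hxyt⟩ := exists_subset_of_mem_shadow h
  exact (mem_cliqueFinset_iff.1 ht).1 (hxyt (mem_insert_self x {y}))
    (hxyt (mem_insert_of_mem (mem_singleton_self y))) hxy

theorem shadow_cliqueFinset_subset_edgeFamily : ∂ (G.cliqueFinset 3) ⊆ edgeFamily G := by
  intro e he
  obtain ⟨x, y, hxy, rfl⟩ := card_eq_two.1
    (card_of_mem_shadow (fun t ht => (mem_cliqueFinset_iff.1 ht).2) he)
  exact pair_mem_edgeFamily (adj_of_mem_shadow_cliqueFinset hxy he)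

theorem card_shadow_cliqueFinset_add_numClusters_le (hG : G.Preconnected) :
    #(∂ (G.cliqueFinset 3)) + numClusters (∂ (G.cliqueFinset 3)) ≤ G.edgeSet.ncard + 1 := by
  have hmono := card_add_numClusters_le (fun e he => ?_)
    (shadow_cliqueFinset_subset_edgeFamily (G := G))
  · have := numClusters_edgeFamily_le_one hG
    have : #(edgeFamily G) ≤ G.edgeSet.ncard := by
      rw [← coe_edgeFinset, Set.ncard_coe_finset]; exact card_image_le
    omega
  · obtain ⟨z, -, rfl⟩ := mem_image.1 he
    rw [Sym2.card_toFinset]; split_ifs <;> omega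

theorem unionGraph_le (hU : IsCover (G.cliqueFinset 3) U) : unionGraph U ≤ G := by
  intro x y h
  obtain ⟨hxy, u, hu, hxyu⟩ := unionGraph_adj.1 h
  exact adj_of_mem_shadow_cliqueFinset hxy ((hU.1 u hu).1 hxyu)

theorem not_containsCopy_cycleGraph_three (hU : IsCover (G.cliqueFinset 3) U) :
    ¬ ContainsCopy (G \ unionGraph U) (cycleGraph 3) := by
  rintro ⟨f, hf⟩
  have hadj (a b : Fin 3) (hab : a ≠ b) : (G \ unionGraph U).Adj (f a) (f b) :=
    f.map_adj (by rw [cycleGraph_three_eq_top]; exact hab)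
  have hclique : (G \ unionGraph U).IsNClique 3 {f 0, f 1, f 2} :=
    is3Clique_triple_iff.2 ⟨hadj 0 1 (by decide), hadj 0 2 (by decide), hadj 1 2 (by decide)⟩
  obtain ⟨u, hu, e, he, het⟩ := hU.2 _ (mem_cliqueFinset_iff.2 (hclique.mono sdiff_le))
  obtain ⟨x, y, hxy, rfl⟩ := card_eq_two.1 (card_of_mem_shadow
    (fun t ht => (mem_cliqueFinset_iff.1 ht).2) ((hU.1 u hu).1 he))
  exact (hclique.1 (het (mem_insert_self x {y})) (het (mem_insert_of_mem (mem_singleton_self y)))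
    hxy).2 (unionGraph_adj.2 ⟨hxy, u, hu, he⟩)

end Graph

end TriangleCover

open TriangleCover in
/-- For every positive integer `n`, every connected graph with at most `4n−2`
edges does not arrow `(nK₂, C₃)`. -/
theorem not_arrows_matching_triangle_of_few_edges (n : ℕ) (hn : 0 < n)
    (V : Type) [Finite V] (G : SimpleGraph V) (hconn : G.Connected)
    (hE : G.edgeSet.ncard ≤ 4 * n - 2) :
    ¬ Arrows G (Matching n) (cycleGraph 3) := by
  classical
  cases nonempty_fintype V
  obtain ⟨U, hU, hUcard⟩ := hasSmallCover (G.cliqueFinset 3) fun t ht =>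
    (mem_cliqueFinset_iff.1 ht).2
  have hlt : #U < n := by
    have := card_shadow_cliqueFinset_add_numClusters_le hconn.preconnected
    omega
  intro harr
  rcases harr _ (unionGraph_le hU) with hred | hblue
  · exact not_containsCopy_matching (fun u hu => (hU.1 u hu).2) hlt hred
  · exact not_containsCopy_cycleGraph_three hU hblue
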